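/- For n = 2 and β = a₁ + a₂ ≤ 1, the upper envelope of f over X ∩ W₁₂, i.e. the convex hull of the hypograph {(x,z) ∈ (X ∩ W₁₂) × ℝ : z ≤ f(x)}, equals H = {(x,z) ∈ ℝ₊² × ℝ : x ∈ Y, z ≤ x₁^{a₁} x₂^{a₂}, and z ≤ u}. -/

import Mathlib

/-!
Write `f = g ^ β` with `g = x₁ ^ (a₁ / β) * x₂ ^ (a₂ / β)`: by weighted AM-GM `g` is superadditive,
hence (being positively homogeneous) concave, and since `β ≤ 1` so is `f`. Thus `H` is convex and
`conv S ⊆ H` reduces to `S ⊆ H`. On the ray `x₂ = t x₁` one has `g = x₁ t ^ (a₂ / β)`, and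
`λ ^ (1 / β) (d₂ x₁ - d₁ x₂)` is `x₁` times the secant of the concave `t ↦ t ^ (a₂ / β)` between `p`
and `q`; so `λ (d₂ x₁ - d₁ x₂) ^ β ≤ f` on the wedge, with equality on its two edges, and `f ≤ u`
forces the last constraint of `Y`.

Conversely, let `(x, z) ∈ H` with `f x > u`. The linear form `d₂ x₁ - d₁ x₂` is constant along the
direction `(d₁, d₂)`, so where the line through `x` in that direction leaves the wedge, the edge
equality gives `f ≤ u`. By the intermediate value theorem the line meets `{f = u}` on both sides of
`x`, and `(x, z)` lies on a segment between two points of the hypograph of `f` over `X ∩ W₁₂`.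
-/

open Real Set

noncomputable def cobbDouglas (a₁ a₂ : ℝ) (x : ℝ × ℝ) : ℝ := x.1 ^ a₁ * x.2 ^ a₂

section CobbDouglas

variable {a₁ a₂ : ℝ}

theorem continuous_cobbDouglas (ha₁ : 0 ≤ a₁) (ha₂ : 0 ≤ a₂) : Continuous (cobbDouglas a₁ a₂) :=
  (continuous_fst.rpow_const fun _ => Or.inr ha₁).mul (continuous_snd.rpow_const fun _ => Or.inr ha₂)

theorem cobbDouglas_nonneg {x : ℝ × ℝ} (hx : 0 ≤ x) : 0 ≤ cobbDouglas a₁ a₂ x :=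
  mul_nonneg (rpow_nonneg hx.1 _) (rpow_nonneg hx.2 _)

theorem cobbDouglas_smul {c : ℝ} (hc : 0 ≤ c) (ha : a₁ + a₂ ≠ 0) {x : ℝ × ℝ} (hx : 0 ≤ x) :
    cobbDouglas a₁ a₂ (c • x) = c ^ (a₁ + a₂) * cobbDouglas a₁ a₂ x := by
  simp only [cobbDouglas, Prod.smul_fst, Prod.smul_snd, smul_eq_mul]
  rw [mul_rpow hc hx.1, mul_rpow hc hx.2, rpow_add' hc ha]
  ring

theorem cobbDouglas_div_rpow {r : ℝ} (hr : r ≠ 0) {x : ℝ × ℝ} (hx : 0 ≤ x) :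
    cobbDouglas (a₁ / r) (a₂ / r) x ^ r = cobbDouglas a₁ a₂ x := by
  rw [cobbDouglas, cobbDouglas, mul_rpow (rpow_nonneg hx.1 _) (rpow_nonneg hx.2 _),
    ← rpow_mul hx.1, ← rpow_mul hx.2, div_mul_cancel₀ _ hr, div_mul_cancel₀ _ hr]

theorem cobbDouglas_eq_mul_rpow {v w : ℝ} (hvw : v + w = 1) {x : ℝ × ℝ} (hx₁ : 0 < x.1)
    (hx₂ : 0 ≤ x.2) : cobbDouglas v w x = x.1 * (x.2 / x.1) ^ w := by
  have hx : x = x.1 • ((1 : ℝ), x.2 / x.1) := by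
    ext <;> simp [mul_div_cancel₀ _ hx₁.ne']
  rw [hx, cobbDouglas_smul hx₁.le (by simp [hvw]) ⟨zero_le_one, div_nonneg hx₂ hx₁.le⟩, hvw,
    rpow_one]
  simp [cobbDouglas, hx₁.ne']

theorem mem_Ioi_prod_Ioi_of_cobbDouglas_pos (ha₁ : a₁ ≠ 0) (ha₂ : a₂ ≠ 0) {x : ℝ × ℝ}
    (hx : 0 ≤ x) (h : 0 < cobbDouglas a₁ a₂ x) : x ∈ Ioi 0 ×ˢ Ioi 0 := by
  refine ⟨hx.1.lt_of_ne ?_, hx.2.lt_of_ne ?_⟩ <;> rintro h0 <;>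
    simp [cobbDouglas, ← h0, zero_rpow ha₁, zero_rpow ha₂] at h

theorem cobbDouglas_add_le {w₁ w₂ : ℝ} (hw₁ : 0 ≤ w₁) (hw₂ : 0 ≤ w₂) (hw : w₁ + w₂ = 1)
    {x y : ℝ × ℝ} (hx : x ∈ Ioi 0 ×ˢ Ioi 0) (hy : 0 ≤ y) :
    cobbDouglas w₁ w₂ x + cobbDouglas w₁ w₂ y ≤ cobbDouglas w₁ w₂ (x + y) := by
  set c := x + y
  have hc₁ : 0 < c.1 := add_pos_of_pos_of_nonneg hx.1 hy.1
  have hc₂ : 0 < c.2 := add_pos_of_pos_of_nonneg hx.2 hy.2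
  have hgc : 0 < cobbDouglas w₁ w₂ c := by unfold cobbDouglas; positivity
  -- weighted AM-GM applied to the coordinatewise ratios `z / c`
  have ratio (z : ℝ × ℝ) (hz : 0 ≤ z) :
      cobbDouglas w₁ w₂ z / cobbDouglas w₁ w₂ c ≤ w₁ * (z.1 / c.1) + w₂ * (z.2 / c.2) := by
    rw [cobbDouglas, cobbDouglas, mul_div_mul_comm, ← div_rpow hz.1 hc₁.le,
      ← div_rpow hz.2 hc₂.le]
    exact geom_mean_le_arith_mean2_weighted hw₁ hw₂ (div_nonneg hz.1 hc₁.le)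
      (div_nonneg hz.2 hc₂.le) hw
  have hsum :
      w₁ * (x.1 / c.1) + w₂ * (x.2 / c.2) + (w₁ * (y.1 / c.1) + w₂ * (y.2 / c.2)) = 1 := by
    have h₁ : x.1 + y.1 = c.1 := rfl
    have h₂ : x.2 + y.2 = c.2 := rfl
    field_simp
    linear_combination w₁ * c.2 * h₁ + w₂ * c.1 * h₂ + c.1 * c.2 * hw
  rw [← div_le_one hgc, add_div]
  linarith [ratio x ⟨hx.1.le, hx.2.le⟩, ratio y hy]

theorem concaveOn_cobbDouglas_of_add_eq_one {w₁ w₂ : ℝ} (hw₁ : 0 ≤ w₁) (hw₂ : 0 ≤ w₂)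
    (hw : w₁ + w₂ = 1) : ConcaveOn ℝ (Ioi 0 ×ˢ Ioi 0) (cobbDouglas w₁ w₂) := by
  refine ⟨(convex_Ioi 0).prod (convex_Ioi 0), fun x hx y hy a b ha hb hab => ?_⟩
  rcases ha.eq_or_lt with rfl | ha
  · obtain rfl : b = 1 := by linarith
    simp
  have hy₀ : 0 ≤ y := ⟨hy.1.le, hy.2.le⟩
  have hw₀ : w₁ + w₂ ≠ 0 := by simp [hw]
  calc a • cobbDouglas w₁ w₂ x + b • cobbDouglas w₁ w₂ y
      = cobbDouglas w₁ w₂ (a • x) + cobbDouglas w₁ w₂ (b • y) := by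
        rw [cobbDouglas_smul ha.le hw₀ ⟨hx.1.le, hx.2.le⟩, cobbDouglas_smul hb hw₀ hy₀, hw,
          rpow_one, rpow_one, smul_eq_mul, smul_eq_mul]
    _ ≤ cobbDouglas w₁ w₂ (a • x + b • y) :=
        cobbDouglas_add_le hw₁ hw₂ hw ⟨mul_pos ha hx.1, mul_pos ha hx.2⟩ (smul_nonneg hb hy₀)

theorem concaveOn_cobbDouglas (ha₁ : 0 ≤ a₁) (ha₂ : 0 ≤ a₂) (hβ₁ : a₁ + a₂ ≤ 1) :
    ConcaveOn ℝ (Ioi 0 ×ˢ Ioi 0) (cobbDouglas a₁ a₂) := by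
  rcases (add_nonneg ha₁ ha₂).eq_or_lt with hβ | hβ
  · obtain ⟨rfl, rfl⟩ : a₁ = 0 ∧ a₂ = 0 := ⟨by linarith, by linarith⟩
    exact (concaveOn_const 1 ((convex_Ioi 0).prod (convex_Ioi 0))).congr fun x _ => by
      simp [cobbDouglas]
  set β := a₁ + a₂
  set g := cobbDouglas (a₁ / β) (a₂ / β)
  have hg : ConcaveOn ℝ (Ioi 0 ×ˢ Ioi 0) g := concaveOn_cobbDouglas_of_add_eq_one
    (div_nonneg ha₁ hβ.le) (div_nonneg ha₂ hβ.le) (by rw [← add_div, div_self hβ.ne'])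
  refine ⟨hg.1, fun x hx y hy a b ha hb hab => ?_⟩
  have hx₀ : 0 ≤ x := ⟨hx.1.le, hx.2.le⟩
  have hy₀ : 0 ≤ y := ⟨hy.1.le, hy.2.le⟩
  have hgx : 0 ≤ g x := cobbDouglas_nonneg hx₀
  have hgy : 0 ≤ g y := cobbDouglas_nonneg hy₀
  rw [← cobbDouglas_div_rpow hβ.ne' hx₀, ← cobbDouglas_div_rpow hβ.ne' hy₀,
    ← cobbDouglas_div_rpow hβ.ne' (add_nonneg (smul_nonneg ha hx₀) (smul_nonneg hb hy₀))]
  calc a • g x ^ β + b • g y ^ β ≤ (a • g x + b • g y) ^ β :=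
        (concaveOn_rpow hβ.le hβ₁).2 hgx hgy ha hb hab
    _ ≤ g (a • x + b • y) ^ β :=
        rpow_le_rpow (by simp only [smul_eq_mul]; positivity) (hg.2 hx hy ha hb hab) hβ.le

end CobbDouglas

theorem ConcaveOn.secant_le {s : Set ℝ} {φ : ℝ → ℝ} (hφ : ConcaveOn ℝ s φ) {p q t : ℝ}
    (hp : p ∈ s) (hq : q ∈ s) (hpq : p < q) (ht : t ∈ Icc p q) :
    ((q - t) * φ p + (t - p) * φ q) / (q - p) ≤ φ t := by
  have hqp : 0 < q - p := sub_pos.2 hpq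
  have h := hφ.2 hp hq (div_nonneg (sub_nonneg.2 ht.2) hqp.le)
    (div_nonneg (sub_nonneg.2 ht.1) hqp.le)
    (show (q - t) / (q - p) + (t - p) / (q - p) = 1 by field_simp; ring)
  have ht' : ((q - t) / (q - p)) • p + ((t - p) / (q - p)) • q = t := by
    simp only [smul_eq_mul]; field_simp; ring
  rw [ht', smul_eq_mul, smul_eq_mul] at h
  calc ((q - t) * φ p + (t - p) * φ q) / (q - p)
      = (q - t) / (q - p) * φ p + (t - p) / (q - p) * φ q := by ring
    _ ≤ φ t := h

theorem ConcaveOn.convex_hypograph_inter_le {E : Type*} [AddCommGroup E] [Module ℝ E]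
    {s : Set E} {f : E → ℝ} (hf : ConcaveOn ℝ s f) (u : ℝ) :
    Convex ℝ {xz : E × ℝ | xz.1 ∈ s ∧ xz.2 ≤ f xz.1 ∧ xz.2 ≤ u} := by
  simpa only [Pi.inf_apply, le_inf_iff] using (hf.inf (concaveOn_const u hf.1)).convex_hypograph

theorem le_rpow_one_div_iff_mul_rpow_le {G lam u β : ℝ} (hG : 0 ≤ G) (hlam : 0 < lam)
    (hu : 0 ≤ u) (hβ : 0 < β) : G ≤ (u / lam) ^ (1 / β) ↔ lam * G ^ β ≤ u := by
  rw [one_div, le_rpow_inv_iff_of_pos hG (div_nonneg hu hlam.le) hβ, le_div_iff₀' hlam]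

theorem mem_segment_add_smul {E : Type*} [AddCommGroup E] [Module ℝ E] (x d : E) {a b : ℝ}
    (ha : a ≤ 0) (hb : 0 ≤ b) : x ∈ segment ℝ (x + a • d) (x + b • d) := by
  have h0 : (0 : ℝ) ∈ segment ℝ a b := by rw [segment_eq_Icc (ha.trans hb)]; exact ⟨ha, hb⟩
  have := image_segment ℝ (AffineMap.lineMap x (x + d)) a b ▸ mem_image_of_mem _ h0
  simpa [AffineMap.lineMap_apply, add_comm] using this

theorem exists_mem_segment_of_le {E : Type*} [AddCommGroup E] [Module ℝ E] {F : E → ℝ}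
    {x d : E} {s₀ s₁ u : ℝ} (hF : ContinuousOn (fun s => F (x + s • d)) (Icc s₀ s₁))
    (hs₀ : s₀ ≤ 0) (hs₁ : 0 ≤ s₁) (h₀ : F (x + s₀ • d) ≤ u) (h₁ : F (x + s₁ • d) ≤ u)
    (hx : u ≤ F x) :
    ∃ a ∈ Icc s₀ s₁, ∃ b ∈ Icc s₀ s₁, F (x + a • d) = u ∧ F (x + b • d) = u ∧
      x ∈ segment ℝ (x + a • d) (x + b • d) := by
  have hF0 : F (x + (0 : ℝ) • d) = F x := by simp
  obtain ⟨a, ha, hFa⟩ := intermediate_value_Icc hs₀ (hF.mono (Icc_subset_Icc le_rfl hs₁))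
    ⟨h₀, hF0 ▸ hx⟩
  obtain ⟨b, hb, hFb⟩ := intermediate_value_Icc' hs₁ (hF.mono (Icc_subset_Icc hs₀ le_rfl))
    ⟨h₁, hF0 ▸ hx⟩
  exact ⟨a, ⟨ha.1, ha.2.trans hs₁⟩, b, ⟨hs₀.trans hb.1, hb.2⟩, hFa, hFb,
    mem_segment_add_smul x d ha.2 hb.1⟩

def wedge (p q : ℝ) : Set (ℝ × ℝ) := {x | p * x.1 ≤ x.2 ∧ x.2 ≤ q * x.1}

noncomputable def wedgeSecant (p q w : ℝ) (x : ℝ × ℝ) : ℝ :=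
  ((q * x.1 - x.2) * p ^ w + (x.2 - p * x.1) * q ^ w) / (q - p)

theorem convex_wedge_inter_cobbDouglas_ge {a₁ a₂ ℓ : ℝ} (ha₁ : 0 < a₁) (ha₂ : 0 < a₂)
    (hβ₁ : a₁ + a₂ ≤ 1) (hℓ : 0 < ℓ) (p q d₁ d₂ M : ℝ) :
    Convex ℝ {x : ℝ × ℝ | 0 ≤ x ∧ x ∈ wedge p q ∧ ℓ ≤ cobbDouglas a₁ a₂ x ∧
      d₂ * x.1 - d₁ * x.2 ≤ M} := by
  intro x ⟨hx, hxW, hℓx, hGx⟩ y ⟨hy, hyW, hℓy, hGy⟩ a b ha hb hab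
  have hpos {z : ℝ × ℝ} (hz : 0 ≤ z) (hℓz : ℓ ≤ cobbDouglas a₁ a₂ z) :=
    mem_Ioi_prod_Ioi_of_cobbDouglas_pos ha₁.ne' ha₂.ne' hz (hℓ.trans_le hℓz)
  have hf := (concaveOn_cobbDouglas ha₁.le ha₂.le hβ₁).2 (hpos hx hℓx) (hpos hy hℓy) ha hb hab
  have hℓab : ℓ = a * ℓ + b * ℓ := by rw [← add_mul, hab, one_mul]
  have hMab : M = a * M + b * M := by rw [← add_mul, hab, one_mul]
  simp only [smul_eq_mul] at hf
  simp only [wedge, mem_ofPred_eq, Prod.fst_add, Prod.snd_add, Prod.smul_fst, Prod.smul_snd,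
    smul_eq_mul] at hxW hyW ⊢
  refine ⟨add_nonneg (smul_nonneg ha hx) (smul_nonneg hb hy), ⟨?_, ?_⟩, ?_, ?_⟩
  · nlinarith [mul_le_mul_of_nonneg_left hxW.1 ha, mul_le_mul_of_nonneg_left hyW.1 hb]
  · nlinarith [mul_le_mul_of_nonneg_left hxW.2 ha, mul_le_mul_of_nonneg_left hyW.2 hb]
  · nlinarith [mul_le_mul_of_nonneg_left hℓx ha, mul_le_mul_of_nonneg_left hℓy hb]
  · nlinarith [mul_le_mul_of_nonneg_left hGx ha, mul_le_mul_of_nonneg_left hGy hb]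

section Wedge

variable {p q : ℝ}

theorem wedgeSecant_nonneg (hp : 0 ≤ p) (hpq : p < q) (w : ℝ) {x : ℝ × ℝ}
    (hx : x ∈ wedge p q) : 0 ≤ wedgeSecant p q w x :=
  div_nonneg (add_nonneg (mul_nonneg (sub_nonneg.2 hx.2) (rpow_nonneg hp _))
    (mul_nonneg (sub_nonneg.2 hx.1) (rpow_nonneg (hp.trans hpq.le) _))) (sub_pos.2 hpq).le

theorem wedgeSecant_le_cobbDouglas (hp : 0 < p) (hpq : p < q) {v w : ℝ} (hv : 0 ≤ v)
    (hw : 0 ≤ w) (hvw : v + w = 1) {x : ℝ × ℝ} (hx₁ : 0 < x.1) (hx : x ∈ wedge p q) :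
    wedgeSecant p q w x ≤ cobbDouglas v w x := by
  have hx₂ : 0 ≤ x.2 := (mul_pos hp hx₁).le.trans hx.1
  have ht : x.2 / x.1 ∈ Icc p q := ⟨(le_div_iff₀ hx₁).2 hx.1, (div_le_iff₀ hx₁).2 hx.2⟩
  have hsec := (concaveOn_rpow hw (by linarith)).secant_le hp.le (hp.le.trans hpq.le) hpq ht
  rw [cobbDouglas_eq_mul_rpow hvw hx₁ hx₂]
  calc wedgeSecant p q w x
      = x.1 * (((q - x.2 / x.1) * p ^ w + (x.2 / x.1 - p) * q ^ w) / (q - p)) := by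
        unfold wedgeSecant; field_simp
    _ ≤ x.1 * (x.2 / x.1) ^ w := mul_le_mul_of_nonneg_left hsec hx₁.le

theorem wedgeSecant_eq_cobbDouglas (hpq : p < q) {v w : ℝ} (hvw : v + w = 1) {x : ℝ × ℝ}
    (hx₁ : 0 < x.1) (hx₂ : 0 ≤ x.2) (hx : x.2 = p * x.1 ∨ x.2 = q * x.1) :
    wedgeSecant p q w x = cobbDouglas v w x := by
  have hqp : q - p ≠ 0 := (sub_pos.2 hpq).ne'
  rw [cobbDouglas_eq_mul_rpow hvw hx₁ hx₂, wedgeSecant]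
  rcases hx with hx | hx <;> rw [hx, mul_div_cancel_right₀ _ hx₁.ne'] <;> field_simp <;> ring

theorem exists_Icc_line_mem_wedge {d₁ d₂ : ℝ} (hp : 0 < p) (hpq : p < q) (hd₁ : d₁ < 0)
    (hd₂ : 0 < d₂) {x : ℝ × ℝ} (hx₁ : 0 < x.1) (hx : x ∈ wedge p q) :
    ∃ s₀ ≤ (0 : ℝ), ∃ s₁ ≥ (0 : ℝ),
      (x + s₀ • (d₁, d₂)).2 = p * (x + s₀ • (d₁, d₂)).1 ∧
      (x + s₁ • (d₁, d₂)).2 = q * (x + s₁ • (d₁, d₂)).1 ∧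
      ∀ s ∈ Icc s₀ s₁, 0 < (x + s • (d₁, d₂)).1 ∧ x + s • (d₁, d₂) ∈ wedge p q := by
  have hep : 0 < d₂ - d₁ * p := by nlinarith
  have heq : 0 < d₂ - d₁ * q := by nlinarith
  set s₀ := (p * x.1 - x.2) / (d₂ - d₁ * p)
  set s₁ := (q * x.1 - x.2) / (d₂ - d₁ * q)
  have hlow (s : ℝ) :
      (x + s • (d₁, d₂)).2 - p * (x + s • (d₁, d₂)).1 = (s - s₀) * (d₂ - d₁ * p) := by
    simp only [s₀, Prod.fst_add, Prod.snd_add, Prod.smul_mk, smul_eq_mul]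
    rw [sub_mul, div_mul_cancel₀ _ hep.ne']
    ring
  have hupp (s : ℝ) :
      q * (x + s • (d₁, d₂)).1 - (x + s • (d₁, d₂)).2 = (s₁ - s) * (d₂ - d₁ * q) := by
    simp only [s₁, Prod.fst_add, Prod.snd_add, Prod.smul_mk, smul_eq_mul]
    rw [sub_mul, div_mul_cancel₀ _ heq.ne']
    ring
  refine ⟨s₀, div_nonpos_of_nonpos_of_nonneg (by linarith [hx.1]) hep.le,
    s₁, div_nonneg (by linarith [hx.2]) heq.le, by linarith [hlow s₀, sub_self s₀],
    by linarith [hupp s₁, sub_self s₁], fun s hs => ?_⟩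
  have hW : x + s • (d₁, d₂) ∈ wedge p q :=
    ⟨by nlinarith [hlow s, hs.1], by nlinarith [hupp s, hs.2]⟩
  -- `d₂ y₁ - d₁ y₂` is constant along the line and positive at `x`
  have hG : 0 < d₂ * (x + s • (d₁, d₂)).1 - d₁ * (x + s • (d₁, d₂)).2 := by
    simp only [Prod.fst_add, Prod.snd_add, Prod.smul_mk, smul_eq_mul]
    nlinarith [hx.1]
  exact ⟨by nlinarith [hW.1, hW.2], hW⟩

theorem exists_mem_segment_cobbDouglas_eq {a₁ a₂ β d₁ d₂ lam u : ℝ} (ha₁ : 0 ≤ a₁)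
    (ha₂ : 0 ≤ a₂) (hp : 0 < p) (hpq : p < q) (hd₁ : d₁ < 0) (hd₂ : 0 < d₂)
    (hedge : ∀ y : ℝ × ℝ, 0 < y.1 → y.2 = p * y.1 ∨ y.2 = q * y.1 →
      cobbDouglas a₁ a₂ y = lam * (d₂ * y.1 - d₁ * y.2) ^ β)
    {x : ℝ × ℝ} (hx₁ : 0 < x.1) (hx : x ∈ wedge p q)
    (hGx : lam * (d₂ * x.1 - d₁ * x.2) ^ β ≤ u) (hux : u ≤ cobbDouglas a₁ a₂ x) :
    ∃ y y' : ℝ × ℝ, (0 ≤ y ∧ y ∈ wedge p q ∧ cobbDouglas a₁ a₂ y = u) ∧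
      (0 ≤ y' ∧ y' ∈ wedge p q ∧ cobbDouglas a₁ a₂ y' = u) ∧ x ∈ segment ℝ y y' := by
  obtain ⟨s₀, hs₀, s₁, hs₁, hedge₀, hedge₁, hline⟩ :=
    exists_Icc_line_mem_wedge hp hpq hd₁ hd₂ hx₁ hx
  set d : ℝ × ℝ := (d₁, d₂)
  have hGd (s : ℝ) : d₂ * (x + s • d).1 - d₁ * (x + s • d).2 = d₂ * x.1 - d₁ * x.2 := by
    simp only [d, Prod.fst_add, Prod.snd_add, Prod.smul_mk, smul_eq_mul]; ring
  have hend (s : ℝ) (hs : s ∈ Icc s₀ s₁)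
      (hsd : (x + s • d).2 = p * (x + s • d).1 ∨ (x + s • d).2 = q * (x + s • d).1) :
      cobbDouglas a₁ a₂ (x + s • d) ≤ u := by
    rwa [hedge _ (hline s hs).1 hsd, hGd]
  have hnonneg (s : ℝ) (hs : s ∈ Icc s₀ s₁) : 0 ≤ x + s • d :=
    ⟨(hline s hs).1.le, show 0 ≤ (x + s • d).2 by nlinarith [(hline s hs).1, (hline s hs).2.1]⟩
  obtain ⟨a, ha, b, hb, hfa, hfb, hseg⟩ := exists_mem_segment_of_le
    ((continuous_cobbDouglas ha₁ ha₂).comp (by fun_prop)).continuousOn hs₀ hs₁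
    (hend s₀ ⟨le_rfl, hs₀.trans hs₁⟩ (.inl hedge₀)) (hend s₁ ⟨hs₀.trans hs₁, le_rfl⟩ (.inr hedge₁))
    hux
  exact ⟨_, _, ⟨hnonneg a ha, (hline a ha).2, hfa⟩, ⟨hnonneg b hb, (hline b hb).2, hfb⟩, hseg⟩

end Wedge

section Parameters

variable {a₁ a₂ p q β d₁ d₂ lam : ℝ}

theorem sub_mul_eq_mul_wedgeSecant (ha₁ : 0 < a₁) (ha₂ : 0 < a₂) (hβ : β = a₁ + a₂)
    (hp : 0 < p) (hpq : p < q)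
    (hd₁ : d₁ = q ^ (-(a₂ / β)) - p ^ (-(a₂ / β))) (hd₂ : d₂ = q ^ (a₁ / β) - p ^ (a₁ / β))
    (y : ℝ × ℝ) :
    d₂ * y.1 - d₁ * y.2 =
      q ^ (-(a₂ / β)) * p ^ (-(a₂ / β)) * (q - p) * wedgeSecant p q (a₂ / β) y := by
  have hq : 0 < q := hp.trans hpq
  have hβ0 : β ≠ 0 := by rw [hβ]; positivity
  set w := a₂ / β
  have hinv (r : ℝ) (hr : 0 < r) : r ^ (-w) * r ^ w = 1 := by rw [← rpow_add hr]; simp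
  have hmul (r : ℝ) (hr : 0 < r) : r ^ (-w) * r = r ^ (a₁ / β) := by
    rw [← rpow_add_one hr.ne']
    congr 1
    simp only [w]
    field_simp
    linarith
  have hqp : q - p ≠ 0 := (sub_pos.2 hpq).ne'
  rw [hd₁, hd₂, wedgeSecant, mul_div_assoc', mul_right_comm _ (q - p),
    mul_div_cancel_right₀ _ hqp]
  linear_combination (-(q ^ (-w)) * (q * y.1 - y.2)) * hinv p hp
    + (-(p ^ (-w)) * (y.2 - p * y.1)) * hinv q hq - y.1 * hmul q hq + y.1 * hmul p hp

theorem lam_mul_rpow_eq (ha₁ : 0 < a₁) (ha₂ : 0 < a₂) (hβ : β = a₁ + a₂)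
    (hp : 0 < p) (hpq : p < q)
    (hd₁ : d₁ = q ^ (-(a₂ / β)) - p ^ (-(a₂ / β))) (hd₂ : d₂ = q ^ (a₁ / β) - p ^ (a₁ / β))
    (hlam : lam = p ^ a₂ / (d₂ - d₁ * p) ^ β) {x : ℝ × ℝ} (hx : x ∈ wedge p q) :
    lam * (d₂ * x.1 - d₁ * x.2) ^ β = wedgeSecant p q (a₂ / β) x ^ β := by
  have hq : 0 < q := hp.trans hpq
  have hβ0 : β ≠ 0 := by rw [hβ]; positivity
  have hG := sub_mul_eq_mul_wedgeSecant ha₁ ha₂ hβ hp hpq hd₁ hd₂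
  set K := q ^ (-(a₂ / β)) * p ^ (-(a₂ / β)) * (q - p)
  have hK : 0 < K := by have := sub_pos.2 hpq; positivity
  have hKp : d₂ - d₁ * p = K * p ^ (a₂ / β) := by
    have hqp : q - p ≠ 0 := (sub_pos.2 hpq).ne'
    simpa [wedgeSecant, hqp] using hG (1, p)
  have hlamK : lam * K ^ β = 1 := by
    rw [hlam, hKp, mul_rpow hK.le (rpow_nonneg hp.le _), ← rpow_mul hp.le,
      div_mul_cancel₀ _ hβ0]
    have : 0 < K ^ β := rpow_pos_of_pos hK β
    have : 0 < p ^ a₂ := rpow_pos_of_pos hp a₂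
    field_simp
  rw [hG, mul_rpow hK.le (wedgeSecant_nonneg hp.le hpq _ hx), ← mul_assoc, hlamK, one_mul]

theorem lam_mul_rpow_le_cobbDouglas (ha₁ : 0 < a₁) (ha₂ : 0 < a₂) (hβ : β = a₁ + a₂)
    (hp : 0 < p) (hpq : p < q)
    (hd₁ : d₁ = q ^ (-(a₂ / β)) - p ^ (-(a₂ / β))) (hd₂ : d₂ = q ^ (a₁ / β) - p ^ (a₁ / β))
    (hlam : lam = p ^ a₂ / (d₂ - d₁ * p) ^ β) {x : ℝ × ℝ} (hx₁ : 0 < x.1)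
    (hx : x ∈ wedge p q) :
    lam * (d₂ * x.1 - d₁ * x.2) ^ β ≤ cobbDouglas a₁ a₂ x := by
  have hβ0 : 0 < β := by rw [hβ]; positivity
  have hx₂ : 0 ≤ x.2 := (mul_pos hp hx₁).le.trans hx.1
  rw [lam_mul_rpow_eq ha₁ ha₂ hβ hp hpq hd₁ hd₂ hlam hx,
    ← cobbDouglas_div_rpow hβ0.ne' ⟨hx₁.le, hx₂⟩]
  exact rpow_le_rpow (wedgeSecant_nonneg hp.le hpq _ hx)
    (wedgeSecant_le_cobbDouglas hp hpq (by positivity) (by positivity)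
      (by rw [← add_div, ← hβ, div_self hβ0.ne']) hx₁ hx) hβ0.le

theorem cobbDouglas_eq_lam_mul_rpow (ha₁ : 0 < a₁) (ha₂ : 0 < a₂) (hβ : β = a₁ + a₂)
    (hp : 0 < p) (hpq : p < q)
    (hd₁ : d₁ = q ^ (-(a₂ / β)) - p ^ (-(a₂ / β))) (hd₂ : d₂ = q ^ (a₁ / β) - p ^ (a₁ / β))
    (hlam : lam = p ^ a₂ / (d₂ - d₁ * p) ^ β) {x : ℝ × ℝ} (hx₁ : 0 < x.1)
    (hx : x.2 = p * x.1 ∨ x.2 = q * x.1) :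
    cobbDouglas a₁ a₂ x = lam * (d₂ * x.1 - d₁ * x.2) ^ β := by
  have hβ0 : 0 < β := by rw [hβ]; positivity
  have hxW : x ∈ wedge p q := by
    refine ⟨?_, ?_⟩ <;> rcases hx with hx | hx <;> nlinarith
  have hx₂ : 0 ≤ x.2 := (mul_pos hp hx₁).le.trans hxW.1
  rw [lam_mul_rpow_eq ha₁ ha₂ hβ hp hpq hd₁ hd₂ hlam hxW,
    wedgeSecant_eq_cobbDouglas hpq (v := a₁ / β) (by rw [← add_div, ← hβ, div_self hβ0.ne'])
      hx₁ hx₂ hx, cobbDouglas_div_rpow hβ0.ne' ⟨hx₁.le, hx₂⟩]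

end Parameters

/-- For `n = 2` and `β = a₁ + a₂ ≤ 1`, the upper envelope of `f` over
`X ∩ W₁₂` equals `H = {(x,z) : x ∈ Y, z ≤ x₁^{a₁} x₂^{a₂}, z ≤ u}`. -/
theorem upper_envelope_n2_of_beta_le_one (a₁ a₂ ℓ u p q β d₁ d₂ lam : ℝ)
    (ha₁ : 0 < a₁) (ha₂ : 0 < a₂) (hβ : β = a₁ + a₂) (hβ1 : β ≤ 1)
    (hℓ : 0 < ℓ) (hℓu : ℓ < u) (hp : 0 < p) (hpq : p < q)
    (hd₁ : d₁ = q ^ (-(a₂ / β)) - p ^ (-(a₂ / β)))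
    (hd₂ : d₂ = q ^ (a₁ / β) - p ^ (a₁ / β))
    (hlam : lam = p ^ a₂ / (d₂ - d₁ * p) ^ β) :
    convexHull ℝ
      {xz : (ℝ × ℝ) × ℝ |
        ((0 ≤ xz.1.1 ∧ 0 ≤ xz.1.2) ∧
          (ℓ ≤ xz.1.1 ^ a₁ * xz.1.2 ^ a₂ ∧ xz.1.1 ^ a₁ * xz.1.2 ^ a₂ ≤ u) ∧
          (p * xz.1.1 ≤ xz.1.2 ∧ xz.1.2 ≤ q * xz.1.1)) ∧
        xz.2 ≤ xz.1.1 ^ a₁ * xz.1.2 ^ a₂} =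
    {xz : (ℝ × ℝ) × ℝ |
        ((0 ≤ xz.1.1 ∧ 0 ≤ xz.1.2) ∧
          (p * xz.1.1 ≤ xz.1.2 ∧ xz.1.2 ≤ q * xz.1.1) ∧
          ℓ ≤ xz.1.1 ^ a₁ * xz.1.2 ^ a₂ ∧
          d₂ * xz.1.1 - d₁ * xz.1.2 ≤ (u / lam) ^ (1 / β)) ∧
        xz.2 ≤ xz.1.1 ^ a₁ * xz.1.2 ^ a₂ ∧
        xz.2 ≤ u} := by
  have hβ0 : 0 < β := by rw [hβ]; positivity
  have hu : 0 < u := hℓ.trans hℓu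
  have hd₁neg : d₁ < 0 := by
    rw [hd₁, sub_neg]; exact rpow_lt_rpow_of_neg hp hpq (neg_lt_zero.2 (by positivity))
  have hd₂pos : 0 < d₂ := by rw [hd₂, sub_pos]; exact rpow_lt_rpow hp.le hpq (by positivity)
  have hlam0 : 0 < lam := by
    have : 0 < d₂ - d₁ * p := by nlinarith
    rw [hlam]; positivity
  have hbound {x : ℝ × ℝ} (hx : 0 ≤ x) :
      d₂ * x.1 - d₁ * x.2 ≤ (u / lam) ^ (1 / β) ↔ lam * (d₂ * x.1 - d₁ * x.2) ^ β ≤ u := by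
    refine le_rpow_one_div_iff_mul_rpow_le ?_ hlam0 hu.le hβ0
    nlinarith [mul_nonneg hd₂pos.le (show 0 ≤ x.1 from hx.1),
      mul_nonneg (neg_nonneg.2 hd₁neg.le) (show 0 ≤ x.2 from hx.2)]
  have hpos {x : ℝ × ℝ} (hx : 0 ≤ x) (hℓx : ℓ ≤ cobbDouglas a₁ a₂ x) :=
    mem_Ioi_prod_Ioi_of_cobbDouglas_pos ha₁.ne' ha₂.ne' hx (hℓ.trans_le hℓx)
  have hconc := (concaveOn_cobbDouglas ha₁.le ha₂.le (hβ ▸ hβ1)).subset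
    (fun x hx => hpos hx.1 hx.2.2.1)
    (convex_wedge_inter_cobbDouglas_ge ha₁ ha₂ (hβ ▸ hβ1) hℓ p q d₁ d₂ ((u / lam) ^ (1 / β)))
  apply Subset.antisymm
  · refine convexHull_min ?_ (hconc.convex_hypograph_inter_le u)
    rintro ⟨x, z⟩ ⟨⟨hx, ⟨hℓx, hxu⟩, hxW⟩, hz⟩
    refine ⟨⟨hx, hxW, hℓx, (hbound hx).2 (le_trans ?_ hxu)⟩, hz, hz.trans hxu⟩
    exact lam_mul_rpow_le_cobbDouglas ha₁ ha₂ hβ hp hpq hd₁ hd₂ hlam (hpos hx hℓx).1 hxW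
  · rintro ⟨x, z⟩ ⟨⟨hx, hxW, hℓx, hGx⟩, hzf, hzu⟩
    rcases le_or_gt (cobbDouglas a₁ a₂ x) u with hxu | hux
    · exact subset_convexHull ℝ _ ⟨⟨hx, ⟨hℓx, hxu⟩, hxW⟩, hzf⟩
    obtain ⟨y, y', ⟨hy, hyW, hfy⟩, ⟨hy', hy'W, hfy'⟩, hseg⟩ :=
      exists_mem_segment_cobbDouglas_eq ha₁.le ha₂.le hp hpq hd₁neg hd₂pos
        (fun y hy₁ hy => cobbDouglas_eq_lam_mul_rpow ha₁ ha₂ hβ hp hpq hd₁ hd₂ hlam hy₁ hy)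
        (hpos hx hℓx).1 hxW ((hbound hx).1 hGx) hux.le
    refine segment_subset_convexHull ?_ ?_
      (Prod.image_mk_segment_left (𝕜 := ℝ) y y' z ▸ mem_image_of_mem _ hseg)
    exacts [⟨⟨hy, ⟨hℓu.le.trans hfy.ge, hfy.le⟩, hyW⟩, hzu.trans hfy.ge⟩,
      ⟨⟨hy', ⟨hℓu.le.trans hfy'.ge, hfy'.le⟩, hy'W⟩, hzu.trans hfy'.ge⟩]
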